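/- arXiv:2209.05346 — 2 statements merged into one kernel-verified Lean document; each statement's English description precedes it below -/
import Mathlib

section
/- Let n ≥ 1, let c_1, …, c_n ∈ ℂ and a_1, …, a_n ∈ ℝ. Then the set {(μ, K) ∈ ℝ × ℝ : μ = K²/2 and μ = (1/2)∑_{l=1}^n c_l·exp(𝐢 K a_l)} is finite. -/
/-!
A solution `(μ, K)` is determined by `K`, which is a real zero of
`K ↦ K² - ∑ l, c l e^{𝐢 K a l}`. This function is real-analytic, and since the exponential sum is
bounded by `S = ∑ l, ‖c l‖` while `K²` is not, its real zeros lie in `[-√S, √S]` and it does not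
vanish identically. Zeros of a nonzero analytic function are isolated, so only finitely many of
them lie in a compact interval.
-/

open Complex Set

theorem AnalyticOnNhd.finite_inter_zeros_of_isCompact {𝕜 E : Type*} [NontriviallyNormedField 𝕜]
    [NormedAddCommGroup E] [NormedSpace 𝕜 E] {f : 𝕜 → E} {U K : Set 𝕜} {x : 𝕜}
    (hf : AnalyticOnNhd 𝕜 f U) (hU : IsConnected U) (hx : x ∈ U) (hfx : f x ≠ 0)
    (hK : IsCompact K) (hKU : K ⊆ U) : (K ∩ f ⁻¹' {0}).Finite := by
  simpa [sdiff_compl] using hK.finite_sdiff_of_mem_codiscreteWithin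
    (Filter.codiscreteWithin_mono hKU (hf.preimage_zero_mem_codiscreteWithin hfx hx hU))

section LatticeSymbol

variable {ι : Type*} [Fintype ι] (c : ι → ℂ) (a : ι → ℝ)

noncomputable def latticeSymbol (K : ℝ) : ℂ :=
  ∑ l, c l * exp (I * ((K * a l : ℝ) : ℂ))

theorem norm_latticeSymbol_le (K : ℝ) : ‖latticeSymbol c a K‖ ≤ ∑ l, ‖c l‖ := by
  refine (norm_sum_le _ _).trans (Finset.sum_le_sum fun l _ => ?_)
  rw [norm_mul, norm_exp_I_mul_ofReal, mul_one]

theorem analyticOnNhd_latticeSymbol : AnalyticOnNhd ℝ (latticeSymbol c a) univ := fun _ _ =>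
  Finset.analyticAt_fun_sum _ fun _ _ => analyticAt_const.mul <|
    analyticAt_cexp.restrictScalars.comp <| analyticAt_const.mul <|
      (ofRealCLM.analyticAt _).comp <| analyticAt_id.mul analyticAt_const

theorem sq_le_of_sq_eq_latticeSymbol {K : ℝ} (h : (K : ℂ) ^ 2 = latticeSymbol c a K) :
    K ^ 2 ≤ ∑ l, ‖c l‖ := by
  simpa [← h, ← ofReal_pow] using norm_latticeSymbol_le c a K

theorem finite_setOf_sq_eq_latticeSymbol :
    {K : ℝ | (K : ℂ) ^ 2 = latticeSymbol c a K}.Finite := by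
  set S := ∑ l, ‖c l‖
  set f : ℝ → ℂ := fun K => (K : ℂ) ^ 2 - latticeSymbol c a K
  have hf : AnalyticOnNhd ℝ f univ := fun K _ =>
    ((ofRealCLM.analyticAt K).pow 2).sub (analyticOnNhd_latticeSymbol c a K trivial)
  have hzero {K : ℝ} : f K = 0 ↔ (K : ℂ) ^ 2 = latticeSymbol c a K := sub_eq_zero
  have hfx : f (√S + 1) ≠ 0 := fun h => by
    have := sq_le_of_sq_eq_latticeSymbol c a (hzero.1 h)
    nlinarith [Real.sq_sqrt (show 0 ≤ S by positivity), Real.sqrt_nonneg S]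
  refine (hf.finite_inter_zeros_of_isCompact isConnected_univ trivial hfx
    (isCompact_closedBall 0 √S) (subset_univ _)).subset fun K hK => ⟨?_, hzero.2 hK⟩
  rw [Metric.mem_closedBall, dist_zero_right, Real.norm_eq_abs]
  exact Real.abs_le_sqrt (sq_le_of_sq_eq_latticeSymbol c a hK)

end LatticeSymbol

theorem stmt4_general (n : ℕ) (c : Fin n → ℂ) (a : Fin n → ℝ) :
    {p : ℝ × ℝ | p.1 = p.2 ^ 2 / 2 ∧
      (p.1 : ℂ) = (1 / 2) * ∑ l, c l * Complex.exp (Complex.I * ((p.2 * a l : ℝ) : ℂ))}.Finite := by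
  refine ((finite_setOf_sq_eq_latticeSymbol c a).image fun K => (K ^ 2 / 2, K)).subset ?_
  rintro ⟨μ, K⟩ ⟨hμK, hμ⟩
  dsimp only at hμK hμ
  subst hμK
  have hK : ((K ^ 2 / 2 : ℝ) : ℂ) = 1 / 2 * latticeSymbol c a K := hμ
  push_cast at hK
  exact ⟨K, show (K : ℂ) ^ 2 = latticeSymbol c a K by linear_combination 2 * hK, rfl⟩

/-- The set of pairs `(μ, K) ∈ ℝ × ℝ` with `μ = K²/2` and
`μ = (1/2)∑ l, c l · exp(𝐢 K a l)` (an equality in `ℂ`) is finite. -/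
theorem stmt4 (n : ℕ) (hn : 1 ≤ n) (c : Fin n → ℂ) (a : Fin n → ℝ) :
    {p : ℝ × ℝ | p.1 = p.2 ^ 2 / 2 ∧
      (p.1 : ℂ) = (1 / 2) * ∑ l, c l * Complex.exp (Complex.I * ((p.2 * a l : ℝ) : ℂ))}.Finite :=
  stmt4_general n c a
end

section
/- Let G = (V, E, ω) be a finite, connected, undirected graph with vertex set V = {1, …, N}, no self-loops, and symmetric weights ω_{ij} = ω_{ji} > 0 for (i,j) ∈ E (and ω_{ij} = 0 otherwise), and define the discrete Fisher information I(ρ) = (1/2) ∑_{i=1}^N ∑_{j ∈ N(i)} ω_{ij} (log ρ_i − log ρ_j)(ρ_i − ρ_j) for ρ in the open probability simplex P_o(G). Then for every C > 0 there exists δ > 0 such that every ρ ∈ P_o(G) with I(ρ) ≤ C satisfies min_{1 ≤ i ≤ N} ρ_i ≥ δ. -/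
/-- One-step propagation estimate. -/
lemma step_bound {a x y K : ℝ} (ha : 0 < a) (hy : 0 < y) (hK : 0 ≤ K)
    (hxa : a ≤ x) (h : (Real.log x - Real.log y) * (x - y) ≤ K) :
    a / 2 * Real.exp (-(2 * K / a)) ≤ y := by
  have hexp1 : Real.exp (-(2 * K / a)) ≤ 1 := by
    apply Real.exp_le_one_iff.mpr
    have : 0 ≤ 2 * K / a := by positivity
    linarith
  have hexp0 : 0 < Real.exp (-(2 * K / a)) := Real.exp_pos _
  rcases le_or_gt (a / 2) y with hcase | hcase
  · nlinarith
  · have hx : 0 < x := lt_of_lt_of_le ha hxa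
    have hya : y < a := by linarith
    have hlx : Real.log a ≤ Real.log x := Real.log_le_log ha hxa
    have hly : Real.log y < Real.log a := Real.log_lt_log hy hya
    have hxy : a / 2 ≤ x - y := by linarith
    have hkey : (Real.log a - Real.log y) * (a / 2) ≤ K := by
      calc (Real.log a - Real.log y) * (a / 2)
          ≤ (Real.log x - Real.log y) * (x - y) := by
            apply mul_le_mul (by linarith) hxy (by linarith) (by linarith)
        _ ≤ K := h
    have h1 : Real.log a - Real.log y ≤ 2 * K / a := by
      rw [le_div_iff₀ ha]; nlinarith
    have h2 : Real.exp (Real.log a - 2 * K / a) ≤ y := by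
      calc Real.exp (Real.log a - 2 * K / a) ≤ Real.exp (Real.log y) :=
            Real.exp_le_exp.mpr (by linarith)
        _ = y := Real.exp_log hy
    have h3 : a * Real.exp (-(2 * K / a)) ≤ y := by
      have heq : a * Real.exp (-(2 * K / a)) = Real.exp (Real.log a - 2 * K / a) := by
        rw [Real.exp_sub, Real.exp_log ha, Real.exp_neg]; ring
      linarith [heq ▸ h2]
    nlinarith

/-- Iterated step sequence. -/
noncomputable def fseq (b K : ℝ) : ℕ → ℝ
  | 0 => b
  | k + 1 => fseq b K k / 2 * Real.exp (-(2 * K / fseq b K k))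

lemma fseq_pos {b K : ℝ} (hb : 0 < b) : ∀ k, 0 < fseq b K k
  | 0 => hb
  | k + 1 => by
      have := fseq_pos (K := K) hb k
      simp only [fseq]
      positivity

lemma fseq_succ_le {b K : ℝ} (hb : 0 < b) (hK : 0 ≤ K) (k : ℕ) :
    fseq b K (k + 1) ≤ fseq b K k := by
  have hp := fseq_pos (K := K) hb k
  have hexp1 : Real.exp (-(2 * K / fseq b K k)) ≤ 1 := by
    apply Real.exp_le_one_iff.mpr
    have : 0 ≤ 2 * K / fseq b K k := by positivity
    linarith
  have hexp0 : 0 < Real.exp (-(2 * K / fseq b K k)) := Real.exp_pos _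
  simp only [fseq]
  nlinarith

lemma fseq_anti {b K : ℝ} (hb : 0 < b) (hK : 0 ≤ K) : Antitone (fseq b K) :=
  antitone_nat_of_succ_le (fseq_succ_le hb hK)

/-- On a finite connected graph (encoded by symmetric weights `ω` with zero
diagonal, positive exactly on edges), a bound `I(ρ) ≤ C` on the discrete Fisher
information forces a uniform positive lower bound `δ` on all entries of a density
`ρ` in the open probability simplex. -/
theorem stmt7 (N : ℕ) (hN : 1 ≤ N) (ω : Fin N → Fin N → ℝ)
    (hsymm : ∀ i j, ω i j = ω j i) (hdiag : ∀ i, ω i i = 0)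
    (hnn : ∀ i j, 0 ≤ ω i j)
    (hconn : (SimpleGraph.fromRel (fun i j : Fin N => 0 < ω i j)).Connected)
    (C : ℝ) (hC : 0 < C) :
    ∃ δ > 0, ∀ ρ : Fin N → ℝ, (∀ i, 0 < ρ i) → (∑ i, ρ i = 1) →
      (1 / 2) * ∑ i, ∑ j, ω i j * (Real.log (ρ i) - Real.log (ρ j)) * (ρ i - ρ j) ≤ C →
      ∀ i, δ ≤ ρ i := by
  set G := SimpleGraph.fromRel (fun i j : Fin N => 0 < ω i j) with hG
  -- minimal positive weight
  set S : Finset (Fin N × Fin N) := Finset.univ.filter (fun p => 0 < ω p.1 p.2) with hS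
  set w : ℝ := if h : S.Nonempty then S.inf' h (fun p => ω p.1 p.2) else 1 with hw
  have hwpos : 0 < w := by
    rw [hw]
    split_ifs with h
    · obtain ⟨p, hp, hpe⟩ := Finset.exists_mem_eq_inf' h (fun p => ω p.1 p.2)
      rw [hpe]
      exact (Finset.mem_filter.mp hp).2
    · norm_num
  have hwle : ∀ u v : Fin N, 0 < ω u v → w ≤ ω u v := by
    intro u v huv
    have hmem : (u, v) ∈ S := Finset.mem_filter.mpr ⟨Finset.mem_univ _, huv⟩
    have hne : S.Nonempty := ⟨_, hmem⟩
    rw [hw, dif_pos hne]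
    exact Finset.inf'_le _ hmem
  set K : ℝ := 2 * C / w with hK
  have hKpos : 0 ≤ K := by positivity
  set b : ℝ := 1 / (N : ℝ) with hb
  have hNpos : (0 : ℝ) < N := by exact_mod_cast hN
  have hbpos : 0 < b := by positivity
  refine ⟨fseq b K N, fseq_pos hbpos N, ?_⟩
  intro ρ hpos hsum hI
  -- each summand is nonnegative
  have hLD : ∀ u v : Fin N,
      0 ≤ (Real.log (ρ u) - Real.log (ρ v)) * (ρ u - ρ v) := by
    intro u v
    rcases le_total (ρ u) (ρ v) with h | h
    · have hl : Real.log (ρ u) ≤ Real.log (ρ v) := Real.log_le_log (hpos u) h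
      exact mul_nonneg_iff.mpr (Or.inr ⟨by linarith, by linarith⟩)
    · have hl : Real.log (ρ v) ≤ Real.log (ρ u) := Real.log_le_log (hpos v) h
      exact mul_nonneg (by linarith) (by linarith)
  have hterm : ∀ u v : Fin N,
      0 ≤ ω u v * (Real.log (ρ u) - Real.log (ρ v)) * (ρ u - ρ v) := by
    intro u v
    calc (0:ℝ) ≤ ω u v * ((Real.log (ρ u) - Real.log (ρ v)) * (ρ u - ρ v)) :=
          mul_nonneg (hnn u v) (hLD u v)
      _ = ω u v * (Real.log (ρ u) - Real.log (ρ v)) * (ρ u - ρ v) := (mul_assoc _ _ _).symm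
  -- edge bound
  have hedge : ∀ u v : Fin N, 0 < ω u v →
      (Real.log (ρ u) - Real.log (ρ v)) * (ρ u - ρ v) ≤ K := by
    intro u v huv
    have hsingle : ω u v * (Real.log (ρ u) - Real.log (ρ v)) * (ρ u - ρ v) ≤
        ∑ i, ∑ j, ω i j * (Real.log (ρ i) - Real.log (ρ j)) * (ρ i - ρ j) := by
      calc ω u v * (Real.log (ρ u) - Real.log (ρ v)) * (ρ u - ρ v)
          ≤ ∑ j, ω u j * (Real.log (ρ u) - Real.log (ρ j)) * (ρ u - ρ j) :=
            Finset.single_le_sum (fun j _ => hterm u j) (Finset.mem_univ v)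
        _ ≤ _ := Finset.single_le_sum
            (fun i _ => Finset.sum_nonneg fun j _ => hterm i j) (Finset.mem_univ u)
    have h2C : ω u v * (Real.log (ρ u) - Real.log (ρ v)) * (ρ u - ρ v) ≤ 2 * C := by
      linarith
    have hT : 0 ≤ (Real.log (ρ u) - Real.log (ρ v)) * (ρ u - ρ v) := hLD u v
    have hwuv := hwle u v huv
    rw [hK, le_div_iff₀ hwpos]
    nlinarith
  -- step along an edge
  have hstep : ∀ (k : ℕ) (u v : Fin N), G.Adj u v → fseq b K k ≤ ρ u →
      fseq b K (k + 1) ≤ ρ v := by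
    intro k u v hadj hu
    rw [hG, SimpleGraph.fromRel_adj] at hadj
    have huv : 0 < ω u v := by
      rcases hadj.2 with h | h
      · exact h
      · rw [hsymm]; exact h
    have := hedge u v huv
    simpa only [fseq] using
      step_bound (fseq_pos hbpos k) (hpos v) hKpos hu this
  -- propagate along walks
  have hwalk : ∀ (u v : Fin N) (p : G.Walk u v) (k : ℕ), fseq b K k ≤ ρ u →
      fseq b K (k + p.length) ≤ ρ v := by
    intro u v p
    induction p with
    | nil => intro k hk; simpa using hk
    | cons hadj q ih =>
        intro k hk
        have := ih (k + 1) (hstep k _ _ hadj hk)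
        rw [SimpleGraph.Walk.length_cons]
        have heq : k + (q.length + 1) = k + 1 + q.length := by ring
        rw [heq]
        exact this
  -- a vertex with a large density
  have hmax : ∃ i₀ : Fin N, b ≤ ρ i₀ := by
    by_contra hcon
    push_neg at hcon
    have hlt : ∑ i, ρ i < ∑ _i : Fin N, b := by
      apply Finset.sum_lt_sum_of_nonempty
      · exact Finset.univ_nonempty_iff.mpr (by
          have : 0 < N := hN
          exact ⟨⟨0, this⟩⟩)
      · intro i _; exact hcon i
    rw [hsum, Finset.sum_const, Finset.card_univ, Fintype.card_fin, nsmul_eq_mul, hb] at hlt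
    rw [mul_one_div, div_self (ne_of_gt hNpos)] at hlt
    exact lt_irrefl 1 hlt
  obtain ⟨i₀, hi₀⟩ := hmax
  intro i
  obtain ⟨q⟩ := hconn.preconnected i₀ i
  have hlen : q.bypass.length < N := by
    have := q.bypass_isPath.length_lt
    simpa using this
  have := hwalk i₀ i q.bypass 0 (by simpa [fseq] using hi₀)
  calc fseq b K N ≤ fseq b K (0 + q.bypass.length) := by
        apply fseq_anti hbpos hKpos
        omega
    _ ≤ ρ i := this
end
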